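/- arXiv:2603.07658 — 2 statements merged into one kernel-verified Lean document; each statement's English description precedes it below -/
import Mathlib

section
/- Let Ω ⊂ ℝ³ be a bounded measurable set with diameter R, and let H(p,q) ∈ ℝ³ be defined for q ∈ Ω and p in the convex hull of Ω with p ≠ q, such that for each fixed q the map p ↦ H(p,q) is differentiable on (conv Ω) \ {q}, with |H(p,q)| ≤ C |p−q|⁻² and |D_p H(p,q)| ≤ C |p−q|⁻³ for all p ≠ q, where C > 0 is a constant. Then there exists a constant C′ depending only on C and R such that for all p₁, p₂ ∈ Ω, ∫_Ω |H(p₁,q) − H(p₂,q)| dq ≤ C′ λ(|p₁ − p₂|). -/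
/-!
Write `d = ‖p₁ - p₂‖` and `n` for the dimension. On the ball `‖q - p₁‖ < 2d` the two terms
`H p₁ q` and `H p₂ q` are estimated separately by `C r^{1-n}`, which integrates in polar
coordinates to `O(d)`. Off that ball every point of the segment `[p₁, p₂]` is at distance at least
`‖q - p₁‖ / 2` from `q`, so the mean value inequality gives
`‖H p₁ q - H p₂ q‖ ≤ 2ⁿ C d ‖q - p₁‖⁻ⁿ`, whose integral over the shell
`2d ≤ ‖q - p₁‖ ≤ 2 diam Ω` is `O(d log (diam Ω / d))`. Finally
`d (1 + log (R / d)) ≤ (1 + R) λ(d)` for `0 < d ≤ R`.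
-/

open MeasureTheory

/-- The quasi-Lipschitz modulus: `λ(d) = d (1 - log d)` for `0 ≤ d < 1`
and `λ(d) = 1` for `d ≥ 1`. -/
noncomputable def qlLambda (d : ℝ) : ℝ := if 1 ≤ d then 1 else d * (1 - Real.log d)

open Set Metric Module
open scoped ENNReal

theorem mul_one_add_log_div_le_qlLambda {d R : ℝ} (hd : 0 < d) (hdR : d ≤ R) :
    d * (1 + Real.log (R / d)) ≤ (1 + R) * qlLambda d := by
  have hR : 0 < R := hd.trans_le hdR
  unfold qlLambda
  split_ifs with h
  · calc d * (1 + Real.log (R / d)) ≤ d * (R / d) := by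
          gcongr
          linarith [Real.log_le_sub_one_of_pos (div_pos hR hd)]
      _ = R := mul_div_cancel₀ R hd.ne'
      _ ≤ (1 + R) * 1 := by linarith
  · have hlogd : Real.log d < 0 := Real.log_neg hd (not_le.1 h)
    have hlogR : Real.log R ≤ R - 1 := Real.log_le_sub_one_of_pos hR
    rw [Real.log_div hR.ne' hd.ne']
    linarith [mul_nonneg hd.le (sub_nonneg.2 hlogR),
      mul_nonneg (mul_nonneg hd.le hR.le) (neg_nonneg.2 hlogd.le)]

theorem norm_sub_le_of_norm_fderiv_le_inv_pow {E F : Type*} [NormedAddCommGroup E]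
    [NormedSpace ℝ E] [NormedAddCommGroup F] [NormedSpace ℝ F] {s : Set E} (hs : Convex ℝ s)
    {f : E → F} {f' : E → E →L[ℝ] F} {q : E} {C : ℝ} (hC : 0 ≤ C) {k : ℕ}
    (hf : ∀ x ∈ s \ {q}, HasFDerivWithinAt f (f' x) (s \ {q}) x)
    (hf' : ∀ x ∈ s, x ≠ q → ‖f' x‖ ≤ C * (‖x - q‖ ^ k)⁻¹)
    {p₁ p₂ : E} (hp₁ : p₁ ∈ s) (hp₂ : p₂ ∈ s) (hq : 2 * ‖p₁ - p₂‖ ≤ ‖p₁ - q‖) :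
    ‖f p₁ - f p₂‖ ≤ 2 ^ k * C * ‖p₁ - p₂‖ * (‖p₁ - q‖ ^ k)⁻¹ := by
  rcases eq_or_ne p₁ p₂ with rfl | hne
  · simp
  have hq₀ : 0 < ‖p₁ - q‖ := by
    have := norm_pos_iff.2 (sub_ne_zero.2 hne)
    linarith
  have hfar : ∀ x ∈ segment ℝ p₁ p₂, ‖p₁ - q‖ / 2 ≤ ‖x - q‖ := fun x hx ↦ by
    have hsum := dist_add_dist_of_mem_segment hx
    simp only [dist_eq_norm] at hsum
    linarith [norm_sub_le_norm_sub_add_norm_sub p₁ x q, norm_nonneg (x - p₂)]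
  have hseg : segment ℝ p₁ p₂ ⊆ s \ {q} := fun x hx ↦
    ⟨hs.segment_subset hp₁ hp₂ hx, fun hxq ↦ by
      have := hfar x hx
      simp only [mem_singleton_iff.1 hxq, sub_self, norm_zero] at this
      linarith⟩
  have hbound : ∀ x ∈ segment ℝ p₁ p₂, ‖f' x‖ ≤ 2 ^ k * C * (‖p₁ - q‖ ^ k)⁻¹ := fun x hx ↦
    calc ‖f' x‖ ≤ C * (‖x - q‖ ^ k)⁻¹ := hf' x (hseg hx).1 fun h ↦ (hseg hx).2 h
      _ ≤ C * ((‖p₁ - q‖ / 2) ^ k)⁻¹ := by gcongr; exact hfar x hx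
      _ = 2 ^ k * C * (‖p₁ - q‖ ^ k)⁻¹ := by rw [div_pow, inv_div]; ring
  refine ((convex_segment p₁ p₂).norm_image_sub_le_of_norm_hasFDerivWithin_le
    (fun x hx ↦ (hf x (hseg hx)).mono hseg) hbound (right_mem_segment ℝ p₁ p₂)
    (left_mem_segment ℝ p₁ p₂)).trans_eq ?_
  ring

section AddHaar

variable {E : Type*} [NormedAddCommGroup E] [NormedSpace ℝ E] [MeasurableSpace E] [BorelSpace E]
  [FiniteDimensional ℝ E] [Nontrivial E] (μ : Measure E) [μ.IsAddHaarMeasure]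

theorem lintegral_fun_norm_addHaar {f : ℝ → ℝ≥0∞} (hf : Measurable f) :
    ∫⁻ x, f ‖x‖ ∂μ = finrank ℝ E * μ (ball 0 1) *
      ∫⁻ y in Ioi (0 : ℝ), ENNReal.ofReal (y ^ (finrank ℝ E - 1)) * f y :=
  calc ∫⁻ x, f ‖x‖ ∂μ = ∫⁻ x : ({0}ᶜ : Set E), f ‖x.1‖ ∂(μ.comap (↑)) := by
        rw [lintegral_subtype_comap (measurableSet_singleton _).compl (fun x : E ↦ f ‖x‖),
          restrict_compl_singleton]
    _ = ∫⁻ x, f x.2 ∂μ.toSphere.prod (.volumeIoiPow (finrank ℝ E - 1)) := by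
        simpa using μ.measurePreserving_homeomorphUnitSphereProd.lintegral_comp_emb
          (Homeomorph.measurableEmbedding _) (f ∘ Subtype.val ∘ Prod.snd)
    _ = μ.toSphere univ * ∫⁻ y : Ioi (0 : ℝ), f y ∂.volumeIoiPow (finrank ℝ E - 1) := by
        rw [lintegral_prod (fun z : sphere (0 : E) 1 × Ioi (0 : ℝ) ↦ f z.2)
          (hf.comp (measurable_subtype_coe.comp measurable_snd)).aemeasurable]
        simp only [lintegral_const, mul_comm]
    _ = _ := by
        rw [Measure.toSphere_apply_univ, Measure.volumeIoiPow,
          lintegral_withDensity_eq_lintegral_mul _ (by fun_prop)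
            (g := fun y : Ioi (0 : ℝ) ↦ f y) (hf.comp measurable_subtype_coe),
          ← lintegral_subtype_comap measurableSet_Ioi]
        rfl

theorem setLIntegral_preimage_norm_sub (p : E) {s : Set ℝ} (hs : MeasurableSet s)
    {g : ℝ → ℝ≥0∞} (hg : Measurable g) :
    ∫⁻ q in (‖· - p‖) ⁻¹' s, g ‖q - p‖ ∂μ = finrank ℝ E * μ (ball 0 1) *
      ∫⁻ y in s ∩ Ioi 0, ENNReal.ofReal (y ^ (finrank ℝ E - 1)) * g y := by
  rw [← lintegral_indicator (hs.preimage (by fun_prop))]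
  change ∫⁻ q, ((‖· - p‖) ⁻¹' s).indicator (g ∘ (‖· - p‖)) q ∂μ = _
  simp_rw [indicator_comp_right]
  rw [lintegral_sub_right_eq_self (fun x ↦ s.indicator g ‖x‖) p,
    lintegral_fun_norm_addHaar μ (hg.indicator hs), ← Measure.restrict_restrict hs,
    ← lintegral_indicator hs]
  simp_rw [indicator_mul_right]

theorem setLIntegral_ball_inv_norm_sub_pow (p : E) (ρ : ℝ) :
    ∫⁻ q in ball p ρ, ENNReal.ofReal ((‖p - q‖ ^ (finrank ℝ E - 1))⁻¹) ∂μ =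
      finrank ℝ E * μ (ball 0 1) * ENNReal.ofReal ρ := by
  have hball : ball p ρ = (‖· - p‖) ⁻¹' Iio ρ := by ext; simp [dist_eq_norm]
  simp_rw [hball, norm_sub_rev p]
  rw [setLIntegral_preimage_norm_sub μ p measurableSet_Iio
      (g := fun y ↦ ENNReal.ofReal ((y ^ (finrank ℝ E - 1))⁻¹)) (by fun_prop),
    setLIntegral_congr_fun (measurableSet_Iio.inter measurableSet_Ioi) (g := fun _ ↦ 1)
      fun y hy ↦ ?_, setLIntegral_one, Iio_inter_Ioi, Real.volume_Ioo, sub_zero]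
  have : 0 < y ^ (finrank ℝ E - 1) := pow_pos hy.2 _
  rw [← ENNReal.ofReal_mul this.le, mul_inv_cancel₀ this.ne', ENNReal.ofReal_one]

theorem setLIntegral_closedBall_diff_ball_inv_norm_sub_pow (p : E) {a b : ℝ} (ha : 0 < a)
    (hab : a ≤ b) :
    ∫⁻ q in closedBall p b \ ball p a, ENNReal.ofReal ((‖p - q‖ ^ finrank ℝ E)⁻¹) ∂μ =
      finrank ℝ E * μ (ball 0 1) * ENNReal.ofReal (Real.log (b / a)) := by
  have hshell : closedBall p b \ ball p a = (‖· - p‖) ⁻¹' Icc a b := by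
    ext; simp [dist_eq_norm, and_comm]
  simp_rw [hshell, norm_sub_rev p]
  rw [setLIntegral_preimage_norm_sub μ p measurableSet_Icc
      (g := fun y ↦ ENNReal.ofReal ((y ^ finrank ℝ E)⁻¹)) (by fun_prop)]
  have hIcc : Icc a b ∩ Ioi 0 = Icc a b := inter_eq_left.2 fun y hy ↦ ha.trans_le hy.1
  rw [hIcc, setLIntegral_congr_fun measurableSet_Icc (g := fun y ↦ ENNReal.ofReal y⁻¹)
    fun y hy ↦ ?_]
  · have hint : IntegrableOn (fun y : ℝ ↦ y⁻¹) (Icc a b) :=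
      (continuousOn_inv₀.mono fun y hy ↦ (ha.trans_le hy.1).ne').integrableOn_Icc
    rw [← ofReal_integral_eq_lintegral_ofReal hint
        (ae_restrict_of_forall_mem measurableSet_Icc fun y hy ↦
          inv_nonneg.2 (ha.le.trans hy.1)),
      integral_Icc_eq_integral_Ioc, ← intervalIntegral.integral_of_le hab,
      integral_inv_of_pos ha (ha.trans_le hab)]
  · have hy0 : 0 < y := ha.trans_le hy.1
    have hn : finrank ℝ E = finrank ℝ E - 1 + 1 := (Nat.sub_add_cancel finrank_pos).symm
    rw [← ENNReal.ofReal_mul (by positivity), hn, pow_succ, Nat.add_sub_cancel]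
    field_simp

variable {F : Type*} [NormedAddCommGroup F]

theorem setLIntegral_inter_ball_norm_sub_le {Ω : Set E} (hΩ : MeasurableSet Ω) {f g : E → F}
    {p₁ p₂ : E} {C : ℝ} (hC : 0 ≤ C)
    (hf : ∀ q ∈ Ω, q ≠ p₁ → ‖f q‖ ≤ C * (‖p₁ - q‖ ^ (finrank ℝ E - 1))⁻¹)
    (hg : ∀ q ∈ Ω, q ≠ p₂ → ‖g q‖ ≤ C * (‖p₂ - q‖ ^ (finrank ℝ E - 1))⁻¹)
    {ρ : ℝ} (hρ : 0 ≤ ρ) :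
    ∫⁻ q in Ω ∩ ball p₁ ρ, ENNReal.ofReal ‖f q - g q‖ ∂μ ≤
      finrank ℝ E * μ (ball 0 1) * ENNReal.ofReal (C * (2 * ρ + ‖p₁ - p₂‖)) := by
  set w : E → E → ℝ≥0∞ := fun p q ↦ ENNReal.ofReal ((‖p - q‖ ^ (finrank ℝ E - 1))⁻¹)
  have hball : Ω ∩ ball p₁ ρ ⊆ ball p₂ (ρ + ‖p₁ - p₂‖) := fun q hq ↦ by
    rw [mem_ball, ← dist_eq_norm]
    linarith [dist_triangle q p₁ p₂, mem_ball.1 hq.2]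
  have hpointwise : ∀ᵐ q ∂μ.restrict (Ω ∩ ball p₁ ρ),
      ENNReal.ofReal ‖f q - g q‖ ≤ ENNReal.ofReal C * w p₁ q + ENNReal.ofReal C * w p₂ q := by
    filter_upwards [ae_restrict_mem (hΩ.inter measurableSet_ball),
      ae_restrict_of_ae (μ.ae_ne p₁), ae_restrict_of_ae (μ.ae_ne p₂)] with q hq hq₁ hq₂
    rw [← ENNReal.ofReal_mul hC, ← ENNReal.ofReal_mul hC, ← ENNReal.ofReal_add (by positivity)
      (by positivity)]
    exact ENNReal.ofReal_le_ofReal ((norm_sub_le _ _).trans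
      (add_le_add (hf q hq.1 hq₁) (hg q hq.1 hq₂)))
  calc ∫⁻ q in Ω ∩ ball p₁ ρ, ENNReal.ofReal ‖f q - g q‖ ∂μ
      ≤ ∫⁻ q in Ω ∩ ball p₁ ρ, ENNReal.ofReal C * w p₁ q + ENNReal.ofReal C * w p₂ q ∂μ :=
        lintegral_mono_ae hpointwise
    _ ≤ ENNReal.ofReal C * ∫⁻ q in ball p₁ ρ, w p₁ q ∂μ +
          ENNReal.ofReal C * ∫⁻ q in ball p₂ (ρ + ‖p₁ - p₂‖), w p₂ q ∂μ := by
        rw [lintegral_add_left (by fun_prop), lintegral_const_mul' _ _ ENNReal.ofReal_ne_top,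
          lintegral_const_mul' _ _ ENNReal.ofReal_ne_top]
        gcongr
        exact inter_subset_right
    _ = _ := by
        rw [setLIntegral_ball_inv_norm_sub_pow, setLIntegral_ball_inv_norm_sub_pow,
          show 2 * ρ + ‖p₁ - p₂‖ = ρ + (ρ + ‖p₁ - p₂‖) by ring, ENNReal.ofReal_mul hC,
          ENNReal.ofReal_add (p := ρ) (q := ρ + ‖p₁ - p₂‖) hρ (by positivity)]
        ring

variable [NormedSpace ℝ F]

theorem setLIntegral_diff_ball_norm_sub_le {Ω : Set E} (hΩ : MeasurableSet Ω)
    (hbdd : Bornology.IsBounded Ω) {C : ℝ} (hC : 0 ≤ C) {H : E → E → F}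
    {H' : E → E → E →L[ℝ] F}
    (hdiff : ∀ q ∈ Ω, ∀ p ∈ (convexHull ℝ Ω) \ {q},
      HasFDerivWithinAt (fun p' ↦ H p' q) (H' p q) ((convexHull ℝ Ω) \ {q}) p)
    (hH' : ∀ q ∈ Ω, ∀ p ∈ convexHull ℝ Ω, p ≠ q → ‖H' p q‖ ≤ C * (‖p - q‖ ^ finrank ℝ E)⁻¹)
    {p₁ p₂ : E} (hp₁ : p₁ ∈ Ω) (hp₂ : p₂ ∈ Ω) (hne : p₁ ≠ p₂) :
    ∫⁻ q in Ω \ ball p₁ (2 * ‖p₁ - p₂‖), ENNReal.ofReal ‖H p₁ q - H p₂ q‖ ∂μ ≤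
      finrank ℝ E * μ (ball 0 1) *
        ENNReal.ofReal (2 ^ finrank ℝ E * C * ‖p₁ - p₂‖ * Real.log (diam Ω / ‖p₁ - p₂‖)) := by
  set d := ‖p₁ - p₂‖
  have hd : 0 < d := norm_pos_iff.2 (sub_ne_zero.2 hne)
  have hdR : d ≤ diam Ω := by
    simpa [dist_eq_norm] using dist_le_diam_of_mem hbdd hp₁ hp₂
  -- The outer radius `2 * diam Ω` (rather than `diam Ω`) keeps it above the inner one `2 * d`.
  have hshell : Ω \ ball p₁ (2 * d) ⊆ closedBall p₁ (2 * diam Ω) \ ball p₁ (2 * d) :=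
    fun q hq ↦ ⟨(dist_le_diam_of_mem hbdd hq.1 hp₁).trans (by linarith [diam_nonneg (s := Ω)]),
      hq.2⟩
  calc ∫⁻ q in Ω \ ball p₁ (2 * d), ENNReal.ofReal ‖H p₁ q - H p₂ q‖ ∂μ
      ≤ ∫⁻ q in Ω \ ball p₁ (2 * d), ENNReal.ofReal (2 ^ finrank ℝ E * C * d) *
          ENNReal.ofReal ((‖p₁ - q‖ ^ finrank ℝ E)⁻¹) ∂μ := by
        refine setLIntegral_mono' (hΩ.diff measurableSet_ball) fun q hq ↦ ?_
        have hfar : 2 * d ≤ ‖p₁ - q‖ := by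
          simpa [dist_eq_norm, norm_sub_rev] using hq.2
        rw [← ENNReal.ofReal_mul (by positivity)]
        exact ENNReal.ofReal_le_ofReal <| norm_sub_le_of_norm_fderiv_le_inv_pow
          (convex_convexHull ℝ Ω) hC (hdiff q hq.1) (hH' q hq.1) (subset_convexHull ℝ Ω hp₁)
          (subset_convexHull ℝ Ω hp₂) hfar
    _ ≤ ENNReal.ofReal (2 ^ finrank ℝ E * C * d) *
          ∫⁻ q in closedBall p₁ (2 * diam Ω) \ ball p₁ (2 * d),
            ENNReal.ofReal ((‖p₁ - q‖ ^ finrank ℝ E)⁻¹) ∂μ := by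
        rw [lintegral_const_mul' _ _ ENNReal.ofReal_ne_top]
        gcongr
    _ = _ := by
        rw [setLIntegral_closedBall_diff_ball_inv_norm_sub_pow μ p₁ (by positivity)
            (by linarith),
          mul_div_mul_left _ _ two_ne_zero,
          ENNReal.ofReal_mul (p := 2 ^ finrank ℝ E * C * d) (by positivity)]
        ring

theorem setLIntegral_norm_sub_le {Ω : Set E} (hΩ : MeasurableSet Ω)
    (hbdd : Bornology.IsBounded Ω) {C : ℝ} (hC : 0 ≤ C) {H : E → E → F}
    {H' : E → E → E →L[ℝ] F}
    (hdiff : ∀ q ∈ Ω, ∀ p ∈ (convexHull ℝ Ω) \ {q},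
      HasFDerivWithinAt (fun p' ↦ H p' q) (H' p q) ((convexHull ℝ Ω) \ {q}) p)
    (hH : ∀ q ∈ Ω, ∀ p ∈ Ω, p ≠ q → ‖H p q‖ ≤ C * (‖p - q‖ ^ (finrank ℝ E - 1))⁻¹)
    (hH' : ∀ q ∈ Ω, ∀ p ∈ convexHull ℝ Ω, p ≠ q → ‖H' p q‖ ≤ C * (‖p - q‖ ^ finrank ℝ E)⁻¹)
    {p₁ p₂ : E} (hp₁ : p₁ ∈ Ω) (hp₂ : p₂ ∈ Ω) (hne : p₁ ≠ p₂) :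
    ∫⁻ q in Ω, ENNReal.ofReal ‖H p₁ q - H p₂ q‖ ∂μ ≤
      ENNReal.ofReal (finrank ℝ E * μ.real (ball 0 1) * (C * (2 * (2 * ‖p₁ - p₂‖) + ‖p₁ - p₂‖) +
        2 ^ finrank ℝ E * C * ‖p₁ - p₂‖ * Real.log (diam Ω / ‖p₁ - p₂‖))) := by
  rw [← lintegral_inter_add_sdiff _ Ω (measurableSet_ball (x := p₁) (ε := 2 * ‖p₁ - p₂‖))]
  refine (add_le_add
    (setLIntegral_inter_ball_norm_sub_le μ hΩ hC (fun q hq hqp ↦ hH q hq p₁ hp₁ hqp.symm)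
      (fun q hq hqp ↦ hH q hq p₂ hp₂ hqp.symm) (by positivity))
    (setLIntegral_diff_ball_norm_sub_le μ hΩ hbdd hC hdiff hH' hp₁ hp₂ hne)).trans_eq ?_
  have hdR : ‖p₁ - p₂‖ ≤ diam Ω := by
    simpa [dist_eq_norm] using dist_le_diam_of_mem hbdd hp₁ hp₂
  have hlog : 0 ≤ Real.log (diam Ω / ‖p₁ - p₂‖) :=
    Real.log_nonneg ((one_le_div (norm_pos_iff.2 (sub_ne_zero.2 hne))).2 hdR)
  rw [← mul_add, ← ENNReal.ofReal_add (by positivity) (by positivity),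
    ENNReal.ofReal_mul (by positivity), ENNReal.ofReal_mul (by positivity),
    ENNReal.ofReal_natCast, ofReal_measureReal]

theorem integral_norm_sub_le_mul_qlLambda {Ω : Set E} (hΩ : MeasurableSet Ω)
    (hbdd : Bornology.IsBounded Ω) {C : ℝ} (hC : 0 ≤ C) {H : E → E → F}
    {H' : E → E → E →L[ℝ] F}
    (hdiff : ∀ q ∈ Ω, ∀ p ∈ (convexHull ℝ Ω) \ {q},
      HasFDerivWithinAt (fun p' ↦ H p' q) (H' p q) ((convexHull ℝ Ω) \ {q}) p)
    (hH : ∀ q ∈ Ω, ∀ p ∈ Ω, p ≠ q → ‖H p q‖ ≤ C * (‖p - q‖ ^ (finrank ℝ E - 1))⁻¹)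
    (hH' : ∀ q ∈ Ω, ∀ p ∈ convexHull ℝ Ω, p ≠ q → ‖H' p q‖ ≤ C * (‖p - q‖ ^ finrank ℝ E)⁻¹)
    {p₁ p₂ : E} (hp₁ : p₁ ∈ Ω) (hp₂ : p₂ ∈ Ω) :
    ∫ q in Ω, ‖H p₁ q - H p₂ q‖ ∂μ ≤ finrank ℝ E * μ.real (ball 0 1) * C *
      (5 + 2 ^ finrank ℝ E) * (1 + diam Ω) * qlLambda ‖p₁ - p₂‖ := by
  rcases eq_or_ne p₁ p₂ with rfl | hne
  · norm_num [qlLambda]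
  set d := ‖p₁ - p₂‖
  have hd : 0 < d := norm_pos_iff.2 (sub_ne_zero.2 hne)
  have hdR : d ≤ diam Ω := by
    simpa [dist_eq_norm] using dist_le_diam_of_mem hbdd hp₁ hp₂
  have hlog : 0 ≤ Real.log (diam Ω / d) := Real.log_nonneg ((one_le_div hd).2 hdR)
  have hbound : C * (2 * (2 * d) + d) + 2 ^ finrank ℝ E * C * d * Real.log (diam Ω / d) ≤
      C * (5 + 2 ^ finrank ℝ E) * (1 + diam Ω) * qlLambda d :=
    calc _ ≤ C * (5 + 2 ^ finrank ℝ E) * (d * (1 + Real.log (diam Ω / d))) := by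
          linarith [mul_nonneg (mul_nonneg hC hd.le) hlog,
            (by positivity : 0 ≤ 2 ^ finrank ℝ E * C * d)]
      _ ≤ C * (5 + 2 ^ finrank ℝ E) * ((1 + diam Ω) * qlLambda d) :=
          mul_le_mul_of_nonneg_left (mul_one_add_log_div_le_qlLambda hd hdR) (by positivity)
      _ = _ := by ring
  calc ∫ q in Ω, ‖H p₁ q - H p₂ q‖ ∂μ
      ≤ (∫⁻ q in Ω, ENNReal.ofReal ‖H p₁ q - H p₂ q‖ ∂μ).toReal := by
        simpa using (le_abs_self _).trans
          (norm_integral_le_lintegral_norm (μ := μ.restrict Ω) fun q ↦ ‖H p₁ q - H p₂ q‖)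
    _ ≤ finrank ℝ E * μ.real (ball 0 1) *
          (C * (2 * (2 * d) + d) + 2 ^ finrank ℝ E * C * d * Real.log (diam Ω / d)) :=
        ENNReal.toReal_le_of_le_ofReal (mul_nonneg (by positivity)
          (add_nonneg (by positivity) (mul_nonneg (by positivity) hlog)))
          (setLIntegral_norm_sub_le μ hΩ hbdd hC hdiff hH hH' hp₁ hp₂ hne)
    _ ≤ finrank ℝ E * μ.real (ball 0 1) *
          (C * (5 + 2 ^ finrank ℝ E) * (1 + diam Ω) * qlLambda d) :=
        mul_le_mul_of_nonneg_left hbound (by positivity)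
    _ = _ := by ring

end AddHaar

theorem kernel_quasiLipschitz_integral_estimate_general
    (Ω : Set (EuclideanSpace ℝ (Fin 3))) (hmeas : MeasurableSet Ω)
    (hbdd : Bornology.IsBounded Ω) (R : ℝ) (hR : Metric.diam Ω = R)
    (C : ℝ) (hC : 0 < C)
    (H : EuclideanSpace ℝ (Fin 3) → EuclideanSpace ℝ (Fin 3) → EuclideanSpace ℝ (Fin 3))
    (H' : EuclideanSpace ℝ (Fin 3) → EuclideanSpace ℝ (Fin 3) →
      (EuclideanSpace ℝ (Fin 3) →L[ℝ] EuclideanSpace ℝ (Fin 3)))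
    (hdiff : ∀ q ∈ Ω, ∀ p ∈ (convexHull ℝ Ω) \ {q},
      HasFDerivWithinAt (fun p' => H p' q) (H' p q) ((convexHull ℝ Ω) \ {q}) p)
    (hH : ∀ q ∈ Ω, ∀ p ∈ convexHull ℝ Ω, p ≠ q → ‖H p q‖ ≤ C * (‖p - q‖ ^ 2)⁻¹)
    (hH' : ∀ q ∈ Ω, ∀ p ∈ convexHull ℝ Ω, p ≠ q → ‖H' p q‖ ≤ C * (‖p - q‖ ^ 3)⁻¹) :
    ∃ C' > (0 : ℝ), ∀ p₁ ∈ Ω, ∀ p₂ ∈ Ω,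
      (∫ q in Ω, ‖H p₁ q - H p₂ q‖) ≤ C' * qlLambda ‖p₁ - p₂‖ := by
  have hdim : finrank ℝ (EuclideanSpace ℝ (Fin 3)) = 3 := finrank_euclideanSpace_fin
  have hR₀ : 0 ≤ R := hR ▸ diam_nonneg
  have hball : 0 < volume.real (ball (0 : EuclideanSpace ℝ (Fin 3)) 1) :=
    ENNReal.toReal_pos (measure_ball_pos volume 0 one_pos).ne' measure_ball_lt_top.ne
  refine ⟨3 * volume.real (ball (0 : EuclideanSpace ℝ (Fin 3)) 1) * C * (5 + 2 ^ 3) * (1 + R),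
    by positivity, fun p₁ hp₁ p₂ hp₂ ↦ ?_⟩
  have key := integral_norm_sub_le_mul_qlLambda volume hmeas hbdd hC.le hdiff
    (fun q hq p hp hpq ↦ by rw [hdim]; exact hH q hq p (subset_convexHull ℝ Ω hp) hpq)
    (by rw [hdim]; exact hH') hp₁ hp₂
  rwa [hdim, hR, Nat.cast_ofNat] at key

/-- Quasi-Lipschitz integral estimate for a kernel `H(p,q) ∈ ℝ³` on a bounded measurable
`Ω ⊆ ℝ³` of diameter `R`: if for each `q ∈ Ω` the map `p ↦ H(p,q)` is differentiable on
`(conv Ω) \ {q}` with `|H(p,q)| ≤ C |p-q|⁻²` and `|D_p H(p,q)| ≤ C |p-q|⁻³`, then there is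
a constant `C'` (depending only on `C` and `R`) such that for all `p₁, p₂ ∈ Ω`,
`∫_Ω |H(p₁,q) - H(p₂,q)| dq ≤ C' λ(|p₁ - p₂|)`. -/
theorem kernel_quasiLipschitz_integral_estimate
    (Ω : Set (EuclideanSpace ℝ (Fin 3))) (hmeas : MeasurableSet Ω)
    (hbdd : Bornology.IsBounded Ω) (R : ℝ) (hR : Metric.diam Ω = R)
    (C : ℝ) (hC : 0 < C)
    (H : EuclideanSpace ℝ (Fin 3) → EuclideanSpace ℝ (Fin 3) → EuclideanSpace ℝ (Fin 3))
    (H' : EuclideanSpace ℝ (Fin 3) → EuclideanSpace ℝ (Fin 3) →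
      (EuclideanSpace ℝ (Fin 3) →L[ℝ] EuclideanSpace ℝ (Fin 3)))
    (hHmeas : ∀ p, AEStronglyMeasurable (fun q => H p q) (volume.restrict Ω))
    (hdiff : ∀ q ∈ Ω, ∀ p ∈ (convexHull ℝ Ω) \ {q},
      HasFDerivWithinAt (fun p' => H p' q) (H' p q) ((convexHull ℝ Ω) \ {q}) p)
    (hH : ∀ q ∈ Ω, ∀ p ∈ convexHull ℝ Ω, p ≠ q → ‖H p q‖ ≤ C * (‖p - q‖ ^ 2)⁻¹)
    (hH' : ∀ q ∈ Ω, ∀ p ∈ convexHull ℝ Ω, p ≠ q → ‖H' p q‖ ≤ C * (‖p - q‖ ^ 3)⁻¹) :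
    ∃ C' > (0 : ℝ), ∀ p₁ ∈ Ω, ∀ p₂ ∈ Ω,
      (∫ q in Ω, ‖H p₁ q - H p₂ q‖) ≤ C' * qlLambda ‖p₁ - p₂‖ :=
  kernel_quasiLipschitz_integral_estimate_general Ω hmeas hbdd R hR C hC H H' hdiff hH hH'
end

section
/- Let T > 0, C > 0, U > 0 with C T ≤ e^{−3/2}. Let (a_k)_{k ≥ 1} be a sequence of nonnegative continuous functions on [0,T] such that a₁(t) ≤ U T for all t ∈ [0,T], and a_{k+1}(t) ≤ C ∫₀ᵗ λ(a_k(τ)) dτ for all k ≥ 1 and t ∈ [0,T]. Then a_{k+1}(t) ≤ (C + U) T e^{−k/2} for all k ≥ 1 and t ∈ [0,T]. -/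
open Real Set Nat

lemma qlLambda_nonneg {d : ℝ} (hd : 0 ≤ d) : 0 ≤ qlLambda d := by
  unfold qlLambda
  split_ifs with h
  · exact zero_le_one
  · have : log d ≤ 0 := log_nonpos hd (not_le.mp h).le
    exact mul_nonneg hd (by linarith)

lemma qlLambda_le_mul_add_exp_neg {d m : ℝ} (hd : 0 ≤ d) (hm : 0 ≤ m) :
    qlLambda d ≤ m * d + exp (-m) := by
  unfold qlLambda
  split_ifs with h
  · nlinarith [add_one_le_exp (-m)]
  rcases hd.eq_or_lt with rfl | hd
  · simp [(exp_pos _).le]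
  · have hlog : log (exp (-m) / d) ≤ exp (-m) / d - 1 := log_le_sub_one_of_pos (by positivity)
    rw [log_div (exp_ne_zero _) hd.ne', log_exp] at hlog
    have := mul_le_mul_of_nonneg_left hlog hd.le
    rw [mul_sub d _ 1, mul_div_cancel₀ _ hd.ne'] at this
    linarith

lemma Real.exp_sub_one_le_mul_exp (x : ℝ) : exp x - 1 ≤ x * exp x := by
  have h : (1 - x) * exp x ≤ exp (-x) * exp x :=
    mul_le_mul_of_nonneg_right (by linarith [add_one_le_exp (-x)]) (exp_pos x).le
  rw [← exp_add, neg_add_cancel, exp_zero] at h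
  linarith

lemma intervalIntegral.integral_mono_on_of_nonneg {f g : ℝ → ℝ} {a b : ℝ} (hab : a ≤ b)
    (hf : ∀ x ∈ Icc a b, 0 ≤ f x) (hg : IntervalIntegrable g MeasureTheory.volume a b)
    (h : ∀ x ∈ Icc a b, f x ≤ g x) : ∫ x in a..b, f x ≤ ∫ x in a..b, g x := by
  rw [intervalIntegral.integral_of_le hab, intervalIntegral.integral_of_le hab]
  have hIoc : ∀ᵐ x ∂MeasureTheory.volume.restrict (Ioc a b), x ∈ Icc a b :=
    (MeasureTheory.ae_restrict_mem measurableSet_Ioc).mono fun _ hx ↦ Ioc_subset_Icc_self hx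
  exact MeasureTheory.integral_mono_of_nonneg (hIoc.mono hf) (hg.1) (hIoc.mono h)

lemma mul_natCast_pow_div_factorial_le {x : ℝ} (hx₀ : 0 ≤ x) (hx : x ≤ exp (-(3 / 2))) (k : ℕ) :
    (x * k) ^ k / k ! ≤ exp (-k / 2) :=
  calc (x * k) ^ k / k ! = x ^ k * ((k : ℝ) ^ k / k !) := by ring
    _ ≤ exp (-(3 / 2)) ^ k * exp k := by
      gcongr
      exact pow_div_factorial_le_exp _ k.cast_nonneg k
    _ = exp (-k / 2) := by rw [← exp_nat_mul, ← exp_add]; ring_nf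

lemma exp_neg_div_mul_exp_sub_one_le {y m : ℝ} (hy₀ : 0 ≤ y) (hy : y ≤ 1 / 2) (hm : 0 < m) :
    exp (-m) / m * (exp (y * m) - 1) ≤ y * exp (-m / 2) :=
  calc exp (-m) / m * (exp (y * m) - 1) ≤ exp (-m) / m * (y * m * exp (m / 2)) := by
        gcongr
        refine (exp_sub_one_le_mul_exp _).trans ?_
        gcongr
        nlinarith
    _ = y * exp (-m / 2) := by
        have : exp (-m) * exp (m / 2) = exp (-(m / 2)) := by rw [← exp_add]; ring_nf
        field_simp
        rw [← this]
        ring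

/-- The solution of `φ_{j+1}(t) = c ∫₀ᵗ (m φ_j + e^{-m})` with `φ_0 = A`. -/
noncomputable def picardMajorant (A c m : ℝ) (j : ℕ) (t : ℝ) : ℝ :=
  A * (c * t * m) ^ j / j ! + exp (-m) / m * (exp (c * t * m) - 1)

section picardMajorant

variable {A c m : ℝ}

lemma picardMajorant_succ_zero (j : ℕ) : picardMajorant A c m (j + 1) 0 = 0 := by
  simp [picardMajorant]

lemma hasDerivAt_picardMajorant_succ (hm : m ≠ 0) (j : ℕ) (t : ℝ) :
    HasDerivAt (picardMajorant A c m (j + 1)) (c * (m * picardMajorant A c m j t + exp (-m))) t := by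
  have hlin : HasDerivAt (fun t ↦ c * t * m) (c * m) t := by
    simpa using ((hasDerivAt_id t).const_mul c).mul_const m
  refine ((((hlin.pow (j + 1)).const_mul A).div_const ((j + 1)! : ℝ)).add
    ((hlin.exp.sub_const 1).const_mul (exp (-m) / m))).congr_deriv ?_
  simp only [picardMajorant, factorial_succ, Nat.add_sub_cancel]
  push_cast
  field_simp
  ring

lemma picardMajorant_succ_eq_integral (hm : m ≠ 0) (j : ℕ) (t : ℝ) :
    picardMajorant A c m (j + 1) t = c * ∫ τ in 0..t, (m * picardMajorant A c m j τ + exp (-m)) := by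
  have hcont : Continuous (picardMajorant A c m j) := by unfold picardMajorant; fun_prop
  rw [← intervalIntegral.integral_const_mul, intervalIntegral.integral_eq_sub_of_hasDerivAt
    (fun τ _ ↦ hasDerivAt_picardMajorant_succ hm j τ) ((by fun_prop : Continuous _).intervalIntegrable _ _),
    picardMajorant_succ_zero, sub_zero]

end picardMajorant

lemma le_picardMajorant {a : ℕ → ℝ → ℝ} {A c m T : ℝ} (hc : 0 ≤ c) (hm : 0 < m)
    (hnonneg : ∀ k, 1 ≤ k → ∀ t ∈ Icc 0 T, 0 ≤ a k t) (h1 : ∀ t ∈ Icc 0 T, a 1 t ≤ A)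
    (hrec : ∀ k, 1 ≤ k → ∀ t ∈ Icc 0 T, a (k + 1) t ≤ c * ∫ τ in 0..t, qlLambda (a k τ))
    (j : ℕ) : ∀ t ∈ Icc 0 T, a (j + 1) t ≤ picardMajorant A c m j t := by
  induction j with
  | zero =>
    intro t ht
    have : 1 ≤ exp (c * t * m) := one_le_exp (by have := ht.1; positivity)
    have : 0 ≤ exp (-m) / m * (exp (c * t * m) - 1) := mul_nonneg (by positivity) (by linarith)
    simp only [picardMajorant, pow_zero, factorial_zero, cast_one, mul_one, div_one]
    linarith [h1 t ht]
  | succ j ih =>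
    intro t ⟨ht₀, htT⟩
    have hsub : Icc 0 t ⊆ Icc 0 T := Icc_subset_Icc_right htT
    have hcont : Continuous (picardMajorant A c m j) := by unfold picardMajorant; fun_prop
    calc a (j + 1 + 1) t ≤ c * ∫ τ in 0..t, qlLambda (a (j + 1) τ) :=
          hrec (j + 1) (by omega) t ⟨ht₀, htT⟩
      _ ≤ c * ∫ τ in 0..t, (m * picardMajorant A c m j τ + exp (-m)) := by
          gcongr
          refine intervalIntegral.integral_mono_on_of_nonneg ht₀
            (fun τ hτ ↦ qlLambda_nonneg (hnonneg _ (by omega) τ (hsub hτ)))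
            ((by fun_prop : Continuous _).intervalIntegrable _ _) fun τ hτ ↦ ?_
          calc qlLambda (a (j + 1) τ) ≤ m * a (j + 1) τ + exp (-m) :=
                qlLambda_le_mul_add_exp_neg (hnonneg _ (by omega) τ (hsub hτ)) hm.le
            _ ≤ m * picardMajorant A c m j τ + exp (-m) := by gcongr; exact ih τ (hsub hτ)
      _ = picardMajorant A c m (j + 1) t := (picardMajorant_succ_eq_integral hm.ne' j t).symm

lemma picardMajorant_self_le {A c T t : ℝ} (hA : 0 ≤ A) (hc : 0 ≤ c)
    (hcT : c * T ≤ exp (-(3 / 2))) (ht : t ∈ Icc 0 T) {k : ℕ} (hk : 0 < k) :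
    picardMajorant A c k k t ≤ (A + c * T) * exp (-k / 2) := by
  have hct₀ : 0 ≤ c * t := mul_nonneg hc ht.1
  have hct : c * t ≤ c * T := mul_le_mul_of_nonneg_left ht.2 hc
  have hhalf : exp (-(3 / 2) : ℝ) ≤ 1 / 2 := by
    rw [exp_neg, inv_le_comm₀ (exp_pos _) (by norm_num)]
    linarith [add_one_le_exp (3 / 2 : ℝ)]
  have hpoly : A * (c * t * k) ^ k / k ! ≤ A * exp (-k / 2) := by
    rw [mul_div_assoc]
    gcongr
    exact mul_natCast_pow_div_factorial_le hct₀ (hct.trans hcT) k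
  have hexp : exp (-k) / k * (exp (c * t * k) - 1) ≤ c * t * exp (-k / 2) :=
    exp_neg_div_mul_exp_sub_one_le hct₀ ((hct.trans hcT).trans hhalf) (by exact_mod_cast hk)
  have : c * t * exp (-k / 2) ≤ c * T * exp (-k / 2) := by gcongr
  unfold picardMajorant
  linarith

theorem picard_geometric_decay_general (T C U : ℝ) (hC : 0 < C)
    (hCT : C * T ≤ Real.exp (-(3 / 2 : ℝ)))
    (a : ℕ → ℝ → ℝ)
    (hnonneg : ∀ k, 1 ≤ k → ∀ t ∈ Set.Icc (0 : ℝ) T, 0 ≤ a k t)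
    (h1 : ∀ t ∈ Set.Icc (0 : ℝ) T, a 1 t ≤ U * T)
    (hrec : ∀ k, 1 ≤ k → ∀ t ∈ Set.Icc (0 : ℝ) T,
      a (k + 1) t ≤ C * ∫ τ in (0 : ℝ)..t, qlLambda (a k τ)) :
    ∀ k, 1 ≤ k → ∀ t ∈ Set.Icc (0 : ℝ) T,
      a (k + 1) t ≤ (C + U) * T * Real.exp (-(k : ℝ) / 2) := by
  intro k hk t ht
  have hUT : 0 ≤ U * T := (hnonneg 1 le_rfl t ht).trans (h1 t ht)
  calc a (k + 1) t ≤ picardMajorant (U * T) C k k t :=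
        le_picardMajorant hC.le (by exact_mod_cast hk) hnonneg h1 hrec k t ht
    _ ≤ (U * T + C * T) * exp (-k / 2) := picardMajorant_self_le hUT hC.le hCT ht hk
    _ = (C + U) * T * exp (-k / 2) := by ring

/-- Geometric decay of the iterates of the Osgood-type integral recursion: if `C T ≤ e^{-3/2}`,
`a₁ ≤ U T` on `[0,T]`, and `a_{k+1}(t) ≤ C ∫₀ᵗ λ(a_k(τ)) dτ`, then
`a_{k+1}(t) ≤ (C + U) T e^{-k/2}` for all `k ≥ 1` and `t ∈ [0,T]`. -/
theorem picard_geometric_decay (T C U : ℝ) (hT : 0 < T) (hC : 0 < C) (hU : 0 < U)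
    (hCT : C * T ≤ Real.exp (-(3 / 2 : ℝ)))
    (a : ℕ → ℝ → ℝ)
    (hnonneg : ∀ k, 1 ≤ k → ∀ t ∈ Set.Icc (0 : ℝ) T, 0 ≤ a k t)
    (hcont : ∀ k, 1 ≤ k → ContinuousOn (a k) (Set.Icc 0 T))
    (h1 : ∀ t ∈ Set.Icc (0 : ℝ) T, a 1 t ≤ U * T)
    (hrec : ∀ k, 1 ≤ k → ∀ t ∈ Set.Icc (0 : ℝ) T,
      a (k + 1) t ≤ C * ∫ τ in (0 : ℝ)..t, qlLambda (a k τ)) :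
    ∀ k, 1 ≤ k → ∀ t ∈ Set.Icc (0 : ℝ) T,
      a (k + 1) t ≤ (C + U) * T * Real.exp (-(k : ℝ) / 2) :=
  picard_geometric_decay_general T C U hC hCT a hnonneg h1 hrec
end
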